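/- Fix a state type S and define the Imp monad and the partial-correctness interpretation θPart : Imp A → WSt A as follows: Imp A has constructors Ret : A → Imp A, Get : (S → Imp A) → Imp A, Put : S → Imp A → Imp A, DoWhile : Imp Bool → Imp A → Imp A; WSt A is the complete lattice of monotone predicate transformers (A → S → Prop) → S → Prop; θPart interprets Ret, Get, Put in the standard stateful way and interprets DoWhile via the greatest fixed point (w.r.t. pointwise implication) of the loop functional w ↦ bindW (θPart body) (fun b => if b then w else retW false). Let do_while body := DoWhile body (Ret ()). Embed θPart into the two-state specification monad Wrel over S × S (acting on the left state for θ1 and on the right state for θ2) and define θPartRel (c1, c2) := bindW (θ1 c1) (fun a1 => bindW (θ2 c2) (fun a2 => retW (a1, a2))). Then the synchronous do-while rule is sound: for any invariant inv : Bool → Bool → S × S → Prop, if θPartRel (body1, body2) refines the specification with precondition inv true true and postcondition asserting, of initial states (s1, s2), results (b1, b2) and final states (s1', s2'), that b1 = b2 and inv b1 b2 (s1', s2'), then θPartRel (do_while body1, do_while body2) refines the specification with precondition inv true true and postcondition that the final states (s1', s2') satisfy inv false false (s1', s2'). -/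

import Mathlib

/-!
Partial correctness in `Imp` is weakest-precondition reasoning for its big-step semantics:
`θ c φ s` holds iff every terminating run of `c` from `s` ends in a state satisfying `φ`.
For a loop this says that the greatest fixed point of the loop functional is the weakest
precondition of the loop-exit relation; that weakest precondition is itself a post-fixed point,
and any post-fixed point holding initially is preserved along every run. Running a program on
one component of `S × S` is treated uniformly for both components through a lens.

Relationally, `θPartRel` then quantifies over pairs of independent terminating runs, and the
rule follows by induction on the two loop-exit derivations in lockstep: the invariant forces
the guards to agree, so both loops exit after the same number of iterations, in states
satisfying `inv false false`.
-/

/-- The `Imp` monad: syntax of imperative programs with state `S` and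
unbounded iteration. -/
inductive Imp (S : Type) : Type → Type 1 where
  | Ret : {A : Type} → A → Imp S A
  | Get : {A : Type} → (S → Imp S A) → Imp S A
  | Put : {A : Type} → S → Imp S A → Imp S A
  | DoWhile : {A : Type} → Imp S Bool → Imp S A → Imp S A

/-- Stateful backward predicate transformers, ordered by pointwise implication
(a complete lattice). -/
def WSt (S A : Type) : Type := (A → S → Prop) → S → Prop

def retW {S A : Type} (a : A) : WSt S A := fun φ s => φ a s

def bindW {S A B : Type} (w : WSt S A) (g : A → WSt S B) : WSt S B :=
  fun φ s => w (fun a s' => g a φ s') s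

noncomputable instance instCompleteLatticeWSt (S A : Type) :
    CompleteLattice (WSt S A) := by
  unfold WSt; infer_instance

/-- The greatest fixed point (with respect to pointwise implication) of a map on
`WSt S Bool`, via the Knaster–Tarski formula. -/
def wfix {S : Type} (F : WSt S Bool → WSt S Bool) : WSt S Bool :=
  sSup {w | w ≤ F w}

/-- The partial-correctness interpretation of `Imp` over the pair-state `S × S`,
acting on the left component of the state. -/
def θPart1 {S : Type} : {A : Type} → Imp S A → WSt (S × S) A
  | _, .Ret a => retW a
  | _, .Get k => fun φ s => θPart1 (k s.1) φ s
  | _, .Put s' k => fun φ s => θPart1 k φ (s', s.2)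
  | _, .DoWhile body k =>
      bindW (wfix (fun w => bindW (θPart1 body) (fun b => if b then w else retW false)))
        (fun _ => θPart1 k)

/-- The partial-correctness interpretation of `Imp` over the pair-state `S × S`,
acting on the right component of the state. -/
def θPart2 {S : Type} : {A : Type} → Imp S A → WSt (S × S) A
  | _, .Ret a => retW a
  | _, .Get k => fun φ s => θPart2 (k s.2) φ s
  | _, .Put s' k => fun φ s => θPart2 k φ (s.1, s')
  | _, .DoWhile body k =>
      bindW (wfix (fun w => bindW (θPart2 body) (fun b => if b then w else retW false)))
        (fun _ => θPart2 k)

/-- The relational partial-correctness effect observation for `Imp`. -/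
def θPartRel {S A1 A2 : Type} (c1 : Imp S A1) (c2 : Imp S A2) :
    WSt (S × S) (A1 × A2) :=
  bindW (θPart1 c1) (fun a1 => bindW (θPart2 c2) (fun a2 => retW (a1, a2)))

/-- `do_while body` iterates `body` as long as it returns `true`. -/
def doWhile {S : Type} (body : Imp S Bool) : Imp S Unit :=
  Imp.DoWhile body (Imp.Ret ())


inductive LoopExit {S : Type} (step : S → Bool → S → Prop) : S → S → Prop
  | exit {s t : S} : step s false t → LoopExit step s t
  | iter {s t u : S} : step s true t → LoopExit step t u → LoopExit step s u

theorem LoopExit.sync {S₁ S₂ : Type} {step₁ : S₁ → Bool → S₁ → Prop}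
    {step₂ : S₂ → Bool → S₂ → Prop} {inv : Bool → Bool → S₁ × S₂ → Prop}
    (hstep : ∀ s₁ s₂ b₁ b₂ t₁ t₂, inv true true (s₁, s₂) → step₁ s₁ b₁ t₁ → step₂ s₂ b₂ t₂ →
      b₁ = b₂ ∧ inv b₁ b₂ (t₁, t₂))
    {s₁ t₁ : S₁} {s₂ t₂ : S₂} (h₁ : LoopExit step₁ s₁ t₁) (h₂ : LoopExit step₂ s₂ t₂)
    (hinv : inv true true (s₁, s₂)) : inv false false (t₁, t₂) := by
  induction h₁ generalizing s₂ with
  | exit hb₁ =>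
    cases h₂ with
    | exit hb₂ => exact (hstep _ _ _ _ _ _ hinv hb₁ hb₂).2
    | iter hb₂ _ => nomatch (hstep _ _ _ _ _ _ hinv hb₁ hb₂).1
  | iter hb₁ _ ih =>
    cases h₂ with
    | exit hb₂ => nomatch (hstep _ _ _ _ _ _ hinv hb₁ hb₂).1
    | iter hb₂ h₂ => exact ih h₂ (hstep _ _ _ _ _ _ hinv hb₁ hb₂).2

structure StateLens (T S : Type) where
  get : T → S
  set : S → T → T
  get_set (s : S) (t : T) : get (set s t) = s
  set_set (s s' : S) (t : T) : set s (set s' t) = set s t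
  set_get (t : T) : set (get t) t = t

attribute [simp] StateLens.get_set StateLens.set_set StateLens.set_get

def StateLens.fst (S S' : Type) : StateLens (S × S') S where
  get := Prod.fst
  set s t := (s, t.2)
  get_set _ _ := rfl
  set_set _ _ _ := rfl
  set_get _ := rfl

def StateLens.snd (S S' : Type) : StateLens (S × S') S' where
  get := Prod.snd
  set s t := (t.1, s)
  get_set _ _ := rfl
  set_set _ _ _ := rfl
  set_get _ := rfl

theorem exists_postfixed_of_wfix {T : Type} {F : WSt T Bool → WSt T Bool}
    {χ : Bool → T → Prop} {t : T} (h : wfix F χ t) : ∃ w, w ≤ F w ∧ w χ t := by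
  unfold wfix WSt at *
  simpa [sSup_apply] using h

theorem wfix_of_postfixed {T : Type} {F : WSt T Bool → WSt T Bool} {χ : Bool → T → Prop} {t : T}
    {w : WSt T Bool} (hw : w ≤ F w) (h : w χ t) : wfix F χ t :=
  le_sSup (α := WSt T Bool) hw χ t h

namespace Imp

variable {S T : Type}

inductive Eval : {A : Type} → Imp S A → S → A → S → Prop
  | ret {A : Type} (a : A) (s : S) : Eval (.Ret a) s a s
  | get {A : Type} {k : S → Imp S A} {s : S} {a : A} {u : S} :
      Eval (k s) s a u → Eval (.Get k) s a u
  | put {A : Type} {k : Imp S A} {s t : S} {a : A} {u : S} :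
      Eval k t a u → Eval (.Put t k) s a u
  | doWhile_true {A : Type} {body : Imp S Bool} {k : Imp S A} {s t : S} {a : A} {u : S} :
      Eval body s true t → Eval (.DoWhile body k) t a u → Eval (.DoWhile body k) s a u
  | doWhile_false {A : Type} {body : Imp S Bool} {k : Imp S A} {s t : S} {a : A} {u : S} :
      Eval body s false t → Eval k t a u → Eval (.DoWhile body k) s a u

theorem Eval.doWhile_of_loopExit {A : Type} {body : Imp S Bool} {k : Imp S A} {s t u : S} {a : A}
    (hloop : LoopExit (Eval body) s t) (hk : Eval k t a u) : Eval (.DoWhile body k) s a u := by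
  induction hloop with
  | exit h => exact .doWhile_false h hk
  | iter h _ ih => exact .doWhile_true h (ih hk)

theorem Eval.loopExit_of_doWhile {A : Type} {body : Imp S Bool} {k : Imp S A} {s u : S} {a : A}
    (h : Eval (.DoWhile body k) s a u) : ∃ t, LoopExit (Eval body) s t ∧ Eval k t a u := by
  generalize hc : Imp.DoWhile body k = c at h
  induction h with
  | doWhile_true h₁ _ _ ih =>
    cases hc
    obtain ⟨t, hloop, hk⟩ := ih rfl
    exact ⟨t, .iter h₁ hloop, hk⟩
  | doWhile_false h₁ h₂ => cases hc; exact ⟨_, .exit h₁, h₂⟩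
  | _ => cases hc

def θOn (L : StateLens T S) : {A : Type} → Imp S A → WSt T A
  | _, .Ret a => retW a
  | _, .Get k => fun φ t => θOn L (k (L.get t)) φ t
  | _, .Put s k => fun φ t => θOn L k φ (L.set s t)
  | _, .DoWhile body k =>
      bindW (wfix (fun w => bindW (θOn L body) (fun b => if b then w else retW false)))
        (fun _ => θOn L k)

theorem θOn_sound (L : StateLens T S) {A : Type} {c : Imp S A} {s : S} {a : A} {u : S}
    (h : Eval c s a u) (φ : A → T → Prop) (t : T) (ht : L.get t = s) (hc : θOn L c φ t) :
    φ a (L.set u t) := by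
  induction h generalizing t with
  | ret => subst ht; rw [L.set_get]; exact hc
  | get _ ih => subst ht; exact ih φ t rfl hc
  | put _ ih => simpa using ih φ _ (L.get_set _ t) hc
  | doWhile_true _ _ ih₁ ih₂ =>
    obtain ⟨w, hw, hwt⟩ := exists_postfixed_of_wfix hc
    have hwnext : w _ (L.set _ t) := ih₁ _ t ht (hw _ t hwt)
    simpa using ih₂ φ _ (L.get_set _ t) (wfix_of_postfixed hw hwnext)
  | doWhile_false _ _ ih₁ ih₂ =>
    obtain ⟨w, hw, hwt⟩ := exists_postfixed_of_wfix hc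
    simpa using ih₂ φ _ (L.get_set _ t) (ih₁ _ t ht (hw _ t hwt))

theorem θOn_complete (L : StateLens T S) {A : Type} (c : Imp S A) (φ : A → T → Prop) (t : T)
    (h : ∀ a u, Eval c (L.get t) a u → φ a (L.set u t)) : θOn L c φ t := by
  induction c generalizing t with
  | Ret a => simpa [θOn, retW] using h a _ (.ret a _)
  | Get k ih => exact ih (L.get t) φ t fun a u hu => h a u (.get hu)
  | Put s k ih => exact ih φ _ fun a u hu => by simpa using h a u (.put (by simpa using hu))
  | DoWhile body k ihb ihk =>
    -- the post-fixed point is the weakest precondition of the loop-exit relation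
    refine wfix_of_postfixed
      (w := fun χ t => ∀ m, LoopExit (Eval body) (L.get t) m → χ false (L.set m t)) ?_ fun m hm => ihk _ _ fun a u hu => ?_
    · intro χ t hw
      refine ihb _ t fun b m hm => ?_
      cases b with
      | false => exact hw m (.exit hm)
      | true => intro m' hm'; simpa using hw m' (.iter hm (by simpa using hm'))
    · simpa using h a u (.doWhile_of_loopExit hm (by simpa using hu))

theorem θOn_iff (L : StateLens T S) {A : Type} (c : Imp S A) (φ : A → T → Prop) (t : T) :
    θOn L c φ t ↔ ∀ a u, Eval c (L.get t) a u → φ a (L.set u t) :=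
  ⟨fun hc _ _ h => θOn_sound L h φ t rfl hc, θOn_complete L c φ t⟩

end Imp

section

open Imp

variable {S : Type}

theorem θPart1_eq_θOn_fst {A : Type} (c : Imp S A) : θPart1 c = θOn (StateLens.fst S S) c := by
  induction c with
  | Ret a => rfl
  | Get k ih => funext φ t; exact congrFun (congrFun (ih t.1) φ) t
  | Put s k ih => funext φ t; exact congrFun (congrFun ih φ) _
  | DoWhile body k ihb ihk => simp only [θPart1, θOn, ihb, ihk]

theorem θPart2_eq_θOn_snd {A : Type} (c : Imp S A) : θPart2 c = θOn (StateLens.snd S S) c := by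
  induction c with
  | Ret a => rfl
  | Get k ih => funext φ t; exact congrFun (congrFun (ih t.2) φ) t
  | Put s k ih => funext φ t; exact congrFun (congrFun ih φ) _
  | DoWhile body k ihb ihk => simp only [θPart2, θOn, ihb, ihk]

theorem θPartRel_iff {A₁ A₂ : Type} (c₁ : Imp S A₁) (c₂ : Imp S A₂)
    (φ : A₁ × A₂ → S × S → Prop) (s₁ s₂ : S) :
    θPartRel c₁ c₂ φ (s₁, s₂) ↔
      ∀ a₁ t₁, Eval c₁ s₁ a₁ t₁ → ∀ a₂ t₂, Eval c₂ s₂ a₂ t₂ → φ (a₁, a₂) (t₁, t₂) := by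
  simp only [θPartRel, bindW, retW, θPart1_eq_θOn_fst, θPart2_eq_θOn_snd, θOn_iff]
  rfl

end

/-- soundness of the synchronous do-while rule for the
relational partial-correctness effect observation, with invariant `inv`. -/
theorem doWhile_rule_sound {S : Type}
    (body1 body2 : Imp S Bool) (inv : Bool → Bool → S × S → Prop)
    (hbody : ∀ (φ : Bool × Bool → S × S → Prop) (s1 s2 : S),
      (inv true true (s1, s2) ∧
        ∀ (b1 b2 : Bool) (s1' s2' : S),
          (b1 = b2 ∧ inv b1 b2 (s1', s2')) → φ (b1, b2) (s1', s2')) →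
      θPartRel body1 body2 φ (s1, s2)) :
    ∀ (φ : Unit × Unit → S × S → Prop) (s1 s2 : S),
      (inv true true (s1, s2) ∧
        ∀ (a1 a2 : Unit) (s1' s2' : S),
          inv false false (s1', s2') → φ (a1, a2) (s1', s2')) →
      θPartRel (doWhile body1) (doWhile body2) φ (s1, s2) := by
  rintro φ s1 s2 ⟨hinv, hpost⟩
  have hstep : ∀ l r b1 b2 l' r', inv true true (l, r) → Imp.Eval body1 l b1 l' →
      Imp.Eval body2 r b2 r' → b1 = b2 ∧ inv b1 b2 (l', r') := fun l r b1 b2 l' r' hlr h1 h2 =>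
    (θPartRel_iff body1 body2 _ l r).mp
      (hbody (fun b p => b.1 = b.2 ∧ inv b.1 b.2 p) l r ⟨hlr, fun _ _ _ _ h => h⟩) b1 l' h1 b2 r' h2
  refine (θPartRel_iff _ _ φ s1 s2).mpr fun _ _ h1 _ _ h2 => ?_
  obtain ⟨_, hloop1, ⟨⟩⟩ := h1.loopExit_of_doWhile
  obtain ⟨_, hloop2, ⟨⟩⟩ := h2.loopExit_of_doWhile
  exact hpost _ _ _ _ (hloop1.sync hstep hloop2 hinv)
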